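/- arXiv:2107.09059 — 4 statements merged into one kernel-verified Lean document; each statement's English description precedes it below -/
import Mathlib

section
/- The digit-interleaving map H_k : Z_p^k → Z_p satisfies: x ≡ y mod p^n in Z_p^k if and only if H_k(x) ≡ H_k(y) mod p^{kn} in Z_p, for all n ≥ 1. -/
open MeasureTheory

variable {p : ℕ}

/-- The `i`-th base-`p` digit of a `p`-adic integer. -/
noncomputable def padicDigit [Fact p.Prime] (x : ℤ_[p]) (i : ℕ) : ℕ :=
  (x.appr (i + 1) - x.appr i) / p ^ i

/-- Congruence modulo `p^n` on `ℤ_[p]`. -/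
def CongMod [Fact p.Prime] (n : ℕ) (x y : ℤ_[p]) : Prop :=
  PadicInt.toZModPow n x = PadicInt.toZModPow n y

/-- Coordinatewise congruence modulo `p^n` on `ℤ_[p]^k`. -/
def CongModVec [Fact p.Prime] {k : ℕ} (n : ℕ) (x y : Fin k → ℤ_[p]) : Prop :=
  ∀ i, CongMod n (x i) (y i)

/-- Coordinatewise reduction `ℤ_[p]^k → (ℤ/p^n ℤ)^k`. -/
noncomputable def redVec [Fact p.Prime] {k : ℕ} (n : ℕ) (x : Fin k → ℤ_[p]) : Fin k → ZMod (p ^ n) :=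
  fun i => PadicInt.toZModPow n (x i)

/-- The digit-interleaving map `H_k : ℤ_[p]^k → ℤ_[p]`. -/
noncomputable def Hk [Fact p.Prime] (k : ℕ) (hk : 0 < k) (x : Fin k → ℤ_[p]) : ℤ_[p] :=
  ∑' m : ℕ, (padicDigit (x ⟨m % k, Nat.mod_lt m hk⟩) (m / k) : ℤ_[p]) * (p : ℤ_[p]) ^ m

/-- `F` is transitive modulo `p^n`: the induced map on `(ℤ/p^n ℤ)^k` is a single cycle. -/
def IsTransitiveModVec [Fact p.Prime] {k : ℕ}
    (F : (Fin k → ℤ_[p]) → (Fin k → ℤ_[p])) (n : ℕ) : Prop :=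
  ∀ x y : Fin k → ℤ_[p], ∃ j : ℕ, CongModVec n (F^[j] x) y

/-- `G` is transitive modulo `p^n`: the induced map on `ℤ/p^n ℤ` is a single cycle. -/
def IsTransitiveModZ [Fact p.Prime] (G : ℤ_[p] → ℤ_[p]) (n : ℕ) : Prop :=
  ∀ x y : ℤ_[p], ∃ j : ℕ, CongMod n (G^[j] x) y

noncomputable instance [Fact p.Prime] : MeasurableSpace ℤ_[p] := borel _
instance [Fact p.Prime] : BorelSpace ℤ_[p] := ⟨rfl⟩

/-- The normalized Haar measure on `ℤ_[p]`. -/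
noncomputable def haarZ [Fact p.Prime] : Measure ℤ_[p] :=
  Measure.addHaarMeasure (⊤ : TopologicalSpace.PositiveCompacts ℤ_[p])

/-- The normalized Haar measure on `ℤ_[p]^k`. -/
noncomputable def haarZk [Fact p.Prime] (k : ℕ) : Measure (Fin k → ℤ_[p]) :=
  Measure.addHaarMeasure (⊤ : TopologicalSpace.PositiveCompacts (Fin k → ℤ_[p]))

/-! Both congruences are read off base-`p` digits. A `p`-adic integer with digit sequence `c`
reduces modulo `p ^ N` to `∑ m < N, c m * p ^ m`, and base-`p` expansions are unique, so two
`p`-adic integers are congruent modulo `p ^ N` iff their first `N` digits agree. The `m`-th digit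
of `Hk x` is digit `m / k` of the coordinate `m % k`, and `m ↦ (m % k, m / k)` maps `{m < k * n}`
bijectively onto `Fin k × {j < n}`. -/

lemma sum_digits_mul_pow_lt {a : ℕ → ℕ} (ha : ∀ m, a m < p) (N : ℕ) :
    ∑ m ∈ Finset.range N, a m * p ^ m < p ^ N := by
  induction N with
  | zero => simp
  | succ N ih =>
    calc ∑ m ∈ Finset.range (N + 1), a m * p ^ m
        < p ^ N + a N * p ^ N := by rw [Finset.sum_range_succ]; omega
      _ = (a N + 1) * p ^ N := by ring
      _ ≤ p * p ^ N := Nat.mul_le_mul_right _ (ha N)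
      _ = p ^ (N + 1) := (pow_succ' p N).symm

lemma sum_digits_mul_pow_inj {a b : ℕ → ℕ} (ha : ∀ m, a m < p) (hb : ∀ m, b m < p) {N : ℕ}
    (h : ∑ m ∈ Finset.range N, a m * p ^ m = ∑ m ∈ Finset.range N, b m * p ^ m) :
    ∀ m < N, a m = b m := by
  induction N with
  | zero => omega
  | succ N ih =>
    have hpN : 0 < p ^ N := pow_pos ((Nat.zero_le _).trans_lt (ha 0)) N
    rw [Finset.sum_range_succ, Finset.sum_range_succ] at h
    have hlow : ∑ m ∈ Finset.range N, a m * p ^ m = ∑ m ∈ Finset.range N, b m * p ^ m := by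
      have := congrArg (· % p ^ N) h
      simpa only [Nat.add_mul_mod_self_right,
        Nat.mod_eq_of_lt (sum_digits_mul_pow_lt ha N),
        Nat.mod_eq_of_lt (sum_digits_mul_pow_lt hb N)] using this
    have htop : a N = b N := by
      have := congrArg (· / p ^ N) h
      simpa only [Nat.add_mul_div_right _ _ hpN,
        Nat.div_eq_of_lt (sum_digits_mul_pow_lt ha N),
        Nat.div_eq_of_lt (sum_digits_mul_pow_lt hb N), zero_add] using this
    intro m hm
    rcases Nat.lt_succ_iff_lt_or_eq.mp hm with hm | rfl
    · exact ih hlow m hm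
    · exact htop

lemma natCast_sum_digits_mul_pow_eq_iff {a b : ℕ → ℕ} (ha : ∀ m, a m < p) (hb : ∀ m, b m < p)
    (N : ℕ) :
    ((∑ m ∈ Finset.range N, a m * p ^ m : ℕ) : ZMod (p ^ N)) =
        ((∑ m ∈ Finset.range N, b m * p ^ m : ℕ) : ZMod (p ^ N)) ↔
      ∀ m < N, a m = b m := by
  rw [ZMod.natCast_eq_natCast_iff', Nat.mod_eq_of_lt (sum_digits_mul_pow_lt ha N),
    Nat.mod_eq_of_lt (sum_digits_mul_pow_lt hb N)]
  refine ⟨sum_digits_mul_pow_inj ha hb, fun h => ?_⟩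
  exact Finset.sum_congr rfl fun m hm => by rw [h m (Finset.mem_range.mp hm)]

section

variable [Fact p.Prime]

lemma padicDigit_lt (x : ℤ_[p]) (i : ℕ) : padicDigit x i < p := by
  have hp : 0 < p ^ i := pow_pos (Fact.out : p.Prime).pos i
  rw [padicDigit, Nat.div_lt_iff_lt_mul hp, ← pow_succ']
  exact (Nat.sub_le _ _).trans_lt (x.appr_lt (i + 1))

lemma appr_eq_sum_padicDigit (x : ℤ_[p]) (n : ℕ) :
    x.appr n = ∑ j ∈ Finset.range n, padicDigit x j * p ^ j := by
  induction n with
  | zero => simp [PadicInt.appr]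
  | succ n ih =>
    rw [Finset.sum_range_succ, ← ih, padicDigit,
      Nat.div_mul_cancel (x.dvd_appr_sub_appr n (n + 1) n.le_succ)]
    have := x.appr_mono (Nat.le_add_right n 1)
    omega

lemma congMod_iff_padicDigit_eq (n : ℕ) (x y : ℤ_[p]) :
    CongMod n x y ↔ ∀ j < n, padicDigit x j = padicDigit y j := by
  change ((x.appr n : ℕ) : ZMod (p ^ n)) = y.appr n ↔ _
  rw [appr_eq_sum_padicDigit, appr_eq_sum_padicDigit]
  exact natCast_sum_digits_mul_pow_eq_iff (padicDigit_lt x) (padicDigit_lt y) n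

lemma summable_natCast_mul_pow (c : ℕ → ℕ) :
    Summable fun m => (c m : ℤ_[p]) * (p : ℤ_[p]) ^ m := by
  have hp : (1 : ℝ) < p := Nat.one_lt_cast.mpr (Fact.out : p.Prime).one_lt
  refine Summable.of_norm_bounded
    (summable_geometric_of_lt_one (by positivity) (inv_lt_one_of_one_lt₀ hp)) fun m => ?_
  calc ‖(c m : ℤ_[p]) * (p : ℤ_[p]) ^ m‖ ≤ 1 * (p : ℝ) ^ (-m : ℤ) := by
        rw [norm_mul, PadicInt.norm_p_pow]
        gcongr
        exact PadicInt.norm_le_one _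
    _ = (p : ℝ)⁻¹ ^ m := by rw [one_mul, zpow_neg, inv_pow, zpow_natCast]

lemma toZModPow_tsum_natCast_mul_pow (c : ℕ → ℕ) (N : ℕ) :
    PadicInt.toZModPow N (∑' m, (c m : ℤ_[p]) * (p : ℤ_[p]) ^ m) =
      ((∑ m ∈ Finset.range N, c m * p ^ m : ℕ) : ZMod (p ^ N)) := by
  have htail : ∑' m, (c (m + N) : ℤ_[p]) * (p : ℤ_[p]) ^ (m + N) =
      (∑' m, (c (m + N) : ℤ_[p]) * (p : ℤ_[p]) ^ m) * (p : ℤ_[p]) ^ N := by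
    simp_rw [pow_add, ← mul_assoc]
    exact (summable_natCast_mul_pow fun m => c (m + N)).tsum_mul_right _
  have hpN : PadicInt.toZModPow N ((p : ℤ_[p]) ^ N) = 0 := by
    rw [← Nat.cast_pow, map_natCast, ZMod.natCast_self]
  rw [← (summable_natCast_mul_pow c).sum_add_tsum_nat_add N, htail, map_add, map_mul, hpN,
    mul_zero, add_zero]
  push_cast
  simp

lemma congMod_tsum_natCast_mul_pow_iff {a b : ℕ → ℕ} (ha : ∀ m, a m < p) (hb : ∀ m, b m < p)
    (N : ℕ) :
    CongMod N (∑' m, (a m : ℤ_[p]) * (p : ℤ_[p]) ^ m) (∑' m, (b m : ℤ_[p]) * (p : ℤ_[p]) ^ m) ↔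
      ∀ m < N, a m = b m := by
  rw [CongMod, toZModPow_tsum_natCast_mul_pow, toZModPow_tsum_natCast_mul_pow]
  exact natCast_sum_digits_mul_pow_eq_iff ha hb N

end

lemma forall_lt_mul_iff_forall_fin {k : ℕ} (hk : 0 < k) (n : ℕ) (P : Fin k → ℕ → Prop) :
    (∀ m < k * n, P ⟨m % k, Nat.mod_lt m hk⟩ (m / k)) ↔ ∀ i : Fin k, ∀ j < n, P i j := by
  constructor
  · intro h i j hj
    have hm : i + k * j < k * n := by nlinarith [i.isLt]
    have hi : (⟨(i + k * j) % k, Nat.mod_lt _ hk⟩ : Fin k) = i := by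
      ext
      simp [Nat.add_mul_mod_self_left, Nat.mod_eq_of_lt i.isLt]
    have hj' : (i + k * j) / k = j := by
      rw [Nat.add_mul_div_left _ _ hk, Nat.div_eq_of_lt i.isLt, zero_add]
    simpa only [hi, hj'] using h _ hm
  · intro h m hm
    exact h _ _ (Nat.div_lt_of_lt_mul hm)

theorem stmt3_general [Fact p.Prime] {k : ℕ} (hk : 0 < k) (n : ℕ)
    (x y : Fin k → ℤ_[p]) :
    CongModVec n x y ↔ CongMod (k * n) (Hk k hk x) (Hk k hk y) := by
  rw [Hk, Hk, congMod_tsum_natCast_mul_pow_iff (fun _ => padicDigit_lt _ _)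
    (fun _ => padicDigit_lt _ _), forall_lt_mul_iff_forall_fin hk n
    fun i j => padicDigit (x i) j = padicDigit (y i) j]
  exact forall_congr' fun i => congMod_iff_padicDigit_eq n (x i) (y i)

theorem stmt3 [Fact p.Prime] {k : ℕ} (hk : 0 < k) (n : ℕ) (hn : 1 ≤ n)
    (x y : Fin k → ℤ_[p]) :
    CongModVec n x y ↔ CongMod (k * n) (Hk k hk x) (Hk k hk y) :=
  stmt3_general hk n x y
end

section
/- A 1-Lipschitz function F : Z_p^k → Z_p^k preserves the normalized Haar measure on Z_p^k if and only if the induced map F mod p^n on (Z/p^n Z)^k is a bijection for every n ≥ 1. -/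
open MeasureTheory

variable {p : ℕ}

namespace Stmt6Aux

open TopologicalSpace MeasurableSpace Set

variable [Fact p.Prime] {k : ℕ}

lemma cong_iff (n : ℕ) (x y : ℤ_[p]) :
    PadicInt.toZModPow n x = PadicInt.toZModPow n y ↔ ‖x - y‖ ≤ (p : ℝ) ^ (-(n : ℤ)) := by
  rw [PadicInt.norm_le_pow_iff_mem_span_pow, ← PadicInt.ker_toZModPow, RingHom.mem_ker,
    map_sub, sub_eq_zero]

lemma hp0 : (0 : ℝ) < (p : ℝ) := by
  exact_mod_cast (Fact.out : p.Prime).pos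

lemma redVec_eq_iff {n : ℕ} {x y : Fin k → ℤ_[p]} :
    redVec n x = redVec n y ↔ dist x y ≤ (p : ℝ) ^ (-(n : ℤ)) := by
  have hr : (0:ℝ) ≤ (p : ℝ) ^ (-(n : ℤ)) := le_of_lt (zpow_pos hp0 _)
  rw [dist_pi_le_iff hr, funext_iff]
  refine forall_congr' fun i => ?_
  rw [dist_eq_norm]
  exact cong_iff n (x i) (y i)

lemma fib_open (n : ℕ) (c : Fin k → ZMod (p ^ n)) :
    IsOpen ((redVec (p := p) n) ⁻¹' {c}) := by
  rw [Metric.isOpen_iff]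
  intro x hx
  refine ⟨(p:ℝ) ^ (-(n:ℤ)), zpow_pos hp0 _, fun y hy => ?_⟩
  simp only [Set.mem_preimage, Set.mem_singleton_iff] at *
  rw [← hx]
  exact redVec_eq_iff.2 (le_of_lt (by rwa [Metric.mem_ball] at hy))

lemma fib_meas (n : ℕ) (c : Fin k → ZMod (p ^ n)) :
    MeasurableSet ((redVec (p := p) n) ⁻¹' {c}) :=
  (fib_open n c).measurableSet

lemma redVec_surjective (n : ℕ) : Function.Surjective (redVec (p := p) (k := k) n) := by
  intro c
  choose z hz using fun i => ZMod.intCast_surjective (c i)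
  exact ⟨fun i => ((z i : ℤ) : ℤ_[p]), funext fun i => by simp [redVec, map_intCast, hz i]⟩

lemma redVec_add (n : ℕ) (a b : Fin k → ℤ_[p]) :
    redVec n (a + b) = redVec n a + redVec n b :=
  funext fun i => map_add (PadicInt.toZModPow n) (a i) (b i)

lemma haarZk_univ : haarZk (p := p) k Set.univ = 1 := by
  have := Measure.addHaarMeasure_self (K₀ := (⊤ : PositiveCompacts (Fin k → ℤ_[p])))
  rwa [PositiveCompacts.coe_top] at this

instance : IsProbabilityMeasure (haarZk (p := p) k) := ⟨haarZk_univ⟩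

lemma measure_fiber_eq (n : ℕ) (c d : Fin k → ZMod (p ^ n)) :
    haarZk k (redVec n ⁻¹' {c}) = haarZk k (redVec n ⁻¹' {d}) := by
  obtain ⟨t, ht⟩ := redVec_surjective (p := p) (k := k) n (d - c)
  have key : (fun x => t + x) ⁻¹' (redVec n ⁻¹' {d}) = redVec n ⁻¹' {c} := by
    ext x
    simp only [Set.mem_preimage, Set.mem_singleton_iff, redVec_add, ht]
    constructor
    · intro h
      have := congrArg (fun z => z - (d - c)) h
      simpa [sub_sub_cancel] using this
    · intro h; rw [h]; abel
  have : haarZk (p := p) k = Measure.addHaarMeasure (⊤ : PositiveCompacts (Fin k → ℤ_[p])) := rfl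
  rw [← key, this, measure_preimage_add]

lemma fib_ne_zero (n : ℕ) (c : Fin k → ZMod (p ^ n)) :
    haarZk k (redVec n ⁻¹' {c}) ≠ 0 := by
  obtain ⟨x, hx⟩ := redVec_surjective (p := p) (k := k) n c
  have : haarZk (p := p) k = Measure.addHaarMeasure (⊤ : PositiveCompacts (Fin k → ℤ_[p])) := rfl
  rw [this]
  exact (fib_open n c).measure_ne_zero _ ⟨x, hx⟩

lemma fib_ne_top (n : ℕ) (c : Fin k → ZMod (p ^ n)) :
    haarZk k (redVec n ⁻¹' {c}) ≠ ⊤ := by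
  refine ne_top_of_le_ne_top ?_ (measure_mono (Set.subset_univ _))
  rw [haarZk_univ]; exact ENNReal.one_ne_top

/-- The generating family of "cylinder" sets. -/
def S (p k : ℕ) [Fact p.Prime] : Set (Set (Fin k → ℤ_[p])) :=
  {s | ∃ (n : ℕ) (c : Fin k → ZMod (p ^ n)), 1 ≤ n ∧ s = redVec n ⁻¹' {c}}

lemma fib_subset {n m : ℕ} (hnm : n ≤ m) {c : Fin k → ZMod (p ^ n)}
    {d : Fin k → ZMod (p ^ m)} {x : Fin k → ℤ_[p]}
    (hx1 : redVec n x = c) (hx2 : redVec m x = d) :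
    (redVec (p := p) m) ⁻¹' {d} ⊆ redVec n ⁻¹' {c} := by
  intro y hy
  simp only [Set.mem_preimage, Set.mem_singleton_iff] at *
  rw [← hx1]
  refine redVec_eq_iff.2 (le_trans (redVec_eq_iff.1 (hy.trans hx2.symm)) ?_)
  have h1 : (1:ℝ) ≤ (p:ℝ) := by exact_mod_cast (Fact.out : p.Prime).one_le
  refine zpow_le_zpow_right₀ h1 ?_
  exact neg_le_neg (Int.ofNat_le.2 hnm)

lemma isPiSystem_S : IsPiSystem (S p k) := by
  have key : ∀ (n m : ℕ), n ≤ m → 1 ≤ n → 1 ≤ m →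
      ∀ (c : Fin k → ZMod (p ^ n)) (d : Fin k → ZMod (p ^ m)),
      (redVec n ⁻¹' {c} ∩ redVec m ⁻¹' {d} : Set (Fin k → ℤ_[p])).Nonempty →
      redVec n ⁻¹' {c} ∩ redVec m ⁻¹' {d} ∈ S p k := by
    intro n m hnm hn hm c d ⟨x, hx1, hx2⟩
    simp only [Set.mem_preimage, Set.mem_singleton_iff] at hx1 hx2
    have := fib_subset hnm hx1 hx2
    refine ⟨m, d, hm, ?_⟩
    rw [Set.inter_eq_self_of_subset_right this]
  rintro s ⟨n, c, hn, rfl⟩ t ⟨m, d, hm, rfl⟩ hne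
  rcases le_total n m with h | h
  · exact key n m h hn hm c d hne
  · rw [Set.inter_comm] at hne ⊢
    exact key m n h hm hn d c hne

lemma gen_eq : (inferInstance : MeasurableSpace (Fin k → ℤ_[p])) = MeasurableSpace.generateFrom (S p k) := by
  rw [BorelSpace.measurable_eq (α := Fin k → ℤ_[p])]
  refine le_antisymm ?_ ?_
  · show MeasurableSpace.generateFrom {s : Set (Fin k → ℤ_[p]) | IsOpen s} ≤ _
    refine generateFrom_le fun U hU => ?_
    have hU' : IsOpen U := hU
    have hUnion : U = ⋃ (n : ℕ), ⋃ (c : Fin k → ZMod (p ^ (n+1))),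
        ⋃ (_ : (redVec (n+1)) ⁻¹' {c} ⊆ U), redVec (n+1) ⁻¹' {c} := by
      ext x
      simp only [Set.mem_iUnion]
      constructor
      · intro hx
        obtain ⟨ε, hε, hball⟩ := Metric.isOpen_iff.1 hU' x hx
        have hp1 : (1:ℝ) < (p:ℝ) := by exact_mod_cast (Fact.out : p.Prime).one_lt
        obtain ⟨n, hn⟩ := exists_pow_lt_of_lt_one hε (by
          rw [inv_lt_one_iff₀]; right; exact hp1)
        have hlt : (p:ℝ) ^ (-((n+1 : ℕ) : ℤ)) < ε := by
          calc (p:ℝ) ^ (-((n+1 : ℕ) : ℤ)) = ((p:ℝ)⁻¹) ^ (n+1) := by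
                rw [zpow_neg, zpow_natCast, inv_pow]
            _ ≤ ((p:ℝ)⁻¹) ^ n := by
                apply pow_le_pow_of_le_one (by positivity) (by
                  rw [inv_le_one_iff₀]; right; exact hp1.le) (by omega)
            _ < ε := hn
        refine ⟨n, redVec (n+1) x, fun y hy => ?_, rfl⟩
        simp only [Set.mem_preimage, Set.mem_singleton_iff] at hy
        exact hball (by rw [Metric.mem_ball]; exact lt_of_le_of_lt (redVec_eq_iff.1 hy) hlt)
      · rintro ⟨n, c, hsub, hx⟩
        exact hsub hx
    rw [hUnion]
    refine MeasurableSet.iUnion fun n => ?_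
    haveI : NeZero (p ^ (n+1)) := ⟨pow_ne_zero _ (Fact.out : p.Prime).ne_zero⟩
    exact MeasurableSet.iUnion fun c => MeasurableSet.iUnion fun h =>
      measurableSet_generateFrom ⟨n+1, c, by omega, rfl⟩
  · refine generateFrom_le ?_
    rintro s ⟨n, c, hn, rfl⟩
    exact measurableSet_generateFrom (fib_open n c)

lemma redVec_F {F : (Fin k → ℤ_[p]) → (Fin k → ℤ_[p])} (hF : LipschitzWith 1 F)
    {n : ℕ} {x y : Fin k → ℤ_[p]} (h : redVec n x = redVec n y) :
    redVec n (F x) = redVec n (F y) := by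
  rw [redVec_eq_iff] at h ⊢
  exact le_trans (by simpa using hF.dist_le_mul x y) h

end Stmt6Aux

theorem stmt6 [Fact p.Prime] {k : ℕ}
    (F : (Fin k → ℤ_[p]) → (Fin k → ℤ_[p])) (hF : LipschitzWith 1 F) :
    MeasurePreserving F (haarZk k) (haarZk k) ↔
      ∀ n : ℕ, 1 ≤ n →
        ∀ Fbar : (Fin k → ZMod (p ^ n)) → (Fin k → ZMod (p ^ n)),
          (∀ x : Fin k → ℤ_[p], Fbar (redVec n x) = redVec n (F x)) →
            Function.Bijective Fbar := by
  constructor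
  · intro hMP n hn Fbar hcompat
    haveI : NeZero (p ^ n) := ⟨pow_ne_zero _ (Fact.out : p.Prime).ne_zero⟩
    rw [← Finite.injective_iff_bijective]
    intro d1 d2 hdd
    by_contra hne
    have v0 := Stmt6Aux.fib_ne_zero n (Fbar d1)
    have vt := Stmt6Aux.fib_ne_top n (Fbar d1)
    have hpre := hMP.measure_preimage (Stmt6Aux.fib_meas n (Fbar d1)).nullMeasurableSet
    have hsub : redVec n ⁻¹' {d1} ∪ redVec n ⁻¹' {d2} ⊆ F ⁻¹' (redVec n ⁻¹' {Fbar d1}) := by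
      rintro x (hx | hx) <;>
        simp only [Set.mem_preimage, Set.mem_singleton_iff] at *
      · rw [← hcompat x, hx]
      · rw [← hcompat x, hx, hdd]
    have hdisj : Disjoint (redVec n ⁻¹' {d1} : Set (Fin k → ℤ_[p])) (redVec n ⁻¹' {d2}) := by
      rw [Set.disjoint_left]
      rintro x hx1 hx2
      simp only [Set.mem_preimage, Set.mem_singleton_iff] at hx1 hx2
      exact hne (hx1 ▸ hx2 ▸ rfl)
    have hle : haarZk k (redVec n ⁻¹' {d1}) + haarZk k (redVec n ⁻¹' {d2})
        ≤ haarZk k (redVec n ⁻¹' {Fbar d1}) := by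
      rw [← measure_union hdisj (Stmt6Aux.fib_meas n d2)]
      exact le_trans (measure_mono hsub) (le_of_eq hpre)
    rw [Stmt6Aux.measure_fiber_eq n d1 (Fbar d1), Stmt6Aux.measure_fiber_eq n d2 (Fbar d1)] at hle
    exact absurd hle (not_le.2 (ENNReal.lt_add_right vt v0))
  · intro hBij
    have hmeas : Measurable F := hF.continuous.measurable
    refine ⟨hmeas, ?_⟩
    haveI : IsFiniteMeasure (Measure.map F (haarZk k)) := ⟨by
      rw [Measure.map_apply hmeas MeasurableSet.univ, Set.preimage_univ, Stmt6Aux.haarZk_univ]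
      exact ENNReal.one_lt_top⟩
    refine ext_of_generate_finite (Stmt6Aux.S p k) Stmt6Aux.gen_eq Stmt6Aux.isPiSystem_S ?_ ?_
    · rintro s ⟨n, c, hn, rfl⟩
      rw [Measure.map_apply hmeas (Stmt6Aux.fib_meas n c)]
      set Fbar : (Fin k → ZMod (p ^ n)) → (Fin k → ZMod (p ^ n)) :=
        fun c => redVec n (F (Function.surjInv (Stmt6Aux.redVec_surjective n) c)) with hFbar
      have hcompat : ∀ x, Fbar (redVec n x) = redVec n (F x) := fun x =>
        Stmt6Aux.redVec_F hF (Function.surjInv_eq (Stmt6Aux.redVec_surjective n) (redVec n x))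
      have hb := hBij n hn Fbar hcompat
      obtain ⟨d, hd⟩ := hb.surjective c
      have hpre : F ⁻¹' (redVec n ⁻¹' {c}) = redVec n ⁻¹' {d} := by
        ext x
        simp only [Set.mem_preimage, Set.mem_singleton_iff]
        constructor
        · intro h
          exact hb.injective (by rw [hcompat x, h, hd])
        · intro h
          rw [← hcompat x, h, hd]
      rw [hpre]
      exact Stmt6Aux.measure_fiber_eq n d c
    · rw [Measure.map_apply hmeas MeasurableSet.univ, Set.preimage_univ]
end

section
/- A 1-Lipschitz measure-preserving function F : Z_p^k → Z_p^k is ergodic with respect to the normalized Haar measure if and only if for every n ≥ 1 the induced map F mod p^n on (Z/p^n Z)^k is a permutation consisting of a single cycle (i.e., F is transitive modulo p^n). -/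
open MeasureTheory

variable {p : ℕ}

/-!
Reduction modulo `p^n` is a factor map onto the finite set `(ℤ/p^nℤ)^k`: since `F` is
1-Lipschitz it descends to `F mod p^n`, and the fibres (cylinders) are balls of positive Haar
measure which form a π-system generating the Borel σ-algebra. If `F` is ergodic, the preimage of
an orbit of `F mod p^n` is invariant up to measure zero and has positive measure, so the orbit is
everything. Conversely, if every `F mod p^n` is transitive, an invariant set meets all cylinders of
one level in equal measure, so it is independent of every cylinder, hence of itself, and has
measure `0` or `1`.
-/

section Factor

variable {X Y : Type*} [MeasurableSpace X] {μ : Measure X} {F : X → X} {π : X → Y} {f : Y → Y}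

lemma measurableSet_preimage_of_measurableSet_fiber [Countable Y]
    (hπ : ∀ c, MeasurableSet (π ⁻¹' {c})) (t : Set Y) : MeasurableSet (π ⁻¹' t) := by
  rw [← Set.biUnion_preimage_singleton]
  exact .biUnion t.to_countable fun c _ => hπ c

theorem Ergodic.exists_iterate_eq_of_semiconj [IsFiniteMeasure μ] [Countable Y]
    (hF : Ergodic F μ) (hπF : Function.Semiconj π F f) (hπ : ∀ c, MeasurableSet (π ⁻¹' {c}))
    (hpos : ∀ c, μ (π ⁻¹' {c}) ≠ 0) (c c' : Y) : ∃ j, f^[j] c = c' := by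
  set S := π ⁻¹' Set.range fun j => f^[j] c
  have hcS : π ⁻¹' {c} ⊆ S := fun x hx => ⟨0, hx.symm⟩
  have hSF : S ⊆ F ⁻¹' S := by
    rintro x ⟨j, hj⟩
    refine ⟨j + 1, ?_⟩
    change f^[j + 1] c = π (F x)
    rw [Function.iterate_succ_apply', hπF x]
    exact congrArg f hj
  rcases hF.ae_empty_or_univ_of_ae_le_preimage
      (measurableSet_preimage_of_measurableSet_fiber hπ _).nullMeasurableSet
      hSF.eventuallyLE with hempty | huniv
  · exact absurd (measure_mono_null hcS (ae_eq_empty.mp hempty)) (hpos c)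
  · by_contra hc'
    refine hpos c' (measure_mono_null (fun x hx => ?_) (ae_eq_univ.mp huniv))
    rintro ⟨j, hj⟩
    exact hc' ⟨j, hj.trans hx⟩

lemma MeasureTheory.MeasurePreserving.measure_inter_fiber_le
    (hF : MeasurePreserving F μ μ) (hπF : Function.Semiconj π F f)
    (hπ : ∀ c, MeasurableSet (π ⁻¹' {c})) {s : Set X} (hs : MeasurableSet s) (hinv : F ⁻¹' s = s)
    (c : Y) (j : ℕ) : μ (s ∩ π ⁻¹' {c}) ≤ μ (s ∩ π ⁻¹' {f^[j] c}) := by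
  induction j with
  | zero => rfl
  | succ j ih =>
    refine ih.trans ?_
    calc μ (s ∩ π ⁻¹' {f^[j] c})
        ≤ μ (F ⁻¹' (s ∩ π ⁻¹' {f^[j + 1] c})) := by
          refine measure_mono ?_
          rintro x ⟨hxs, hx⟩
          refine ⟨by rwa [← hinv] at hxs, ?_⟩
          change π (F x) = f^[j + 1] c
          rw [hπF x, Function.iterate_succ_apply']
          exact congrArg f hx
      _ = μ (s ∩ π ⁻¹' {f^[j + 1] c}) :=
          hF.measure_preimage (hs.inter (hπ _)).nullMeasurableSet

/-- Along orbits of `f` the measure of the trace of `s` on fibres can only grow, so transitivity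
makes it constant. -/
lemma MeasureTheory.MeasurePreserving.measure_inter_fiber_eq_mul [IsProbabilityMeasure μ]
    [Fintype Y] (hF : MeasurePreserving F μ μ) (hπF : Function.Semiconj π F f)
    (hπ : ∀ c, MeasurableSet (π ⁻¹' {c})) (hf : ∀ c c', ∃ j, f^[j] c = c')
    {s : Set X} (hs : MeasurableSet s) (hinv : F ⁻¹' s = s) (c : Y) :
    μ (s ∩ π ⁻¹' {c}) = μ s * μ (π ⁻¹' {c}) := by
  have hconst : ∀ {t : Set X}, MeasurableSet t → F ⁻¹' t = t →
      ∀ c', μ (t ∩ π ⁻¹' {c'}) = μ (t ∩ π ⁻¹' {c}) := fun {t} ht htinv c' => by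
    obtain ⟨i, hi⟩ := hf c c'
    obtain ⟨j, hj⟩ := hf c' c
    refine le_antisymm ?_ ?_
    · simpa only [hj] using hF.measure_inter_fiber_le hπF hπ ht htinv c' j
    · simpa only [hi] using hF.measure_inter_fiber_le hπF hπ ht htinv c i
  have hsum : ∀ {t : Set X}, MeasurableSet t → F ⁻¹' t = t →
      μ t = Fintype.card Y * μ (t ∩ π ⁻¹' {c}) := fun {t} ht htinv => by
    have := sum_measure_preimage_singleton (μ := μ.restrict t) Finset.univ fun c _ => hπ c
    simp only [Measure.restrict_apply (hπ _), Finset.coe_univ, Set.preimage_univ,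
      Measure.restrict_apply_univ, Set.inter_comm _ t, hconst ht htinv, Finset.sum_const,
      Finset.card_univ, nsmul_eq_mul] at this
    exact this.symm
  have huniv := hsum MeasurableSet.univ Set.preimage_univ
  rw [measure_univ, Set.univ_inter] at huniv
  calc μ (s ∩ π ⁻¹' {c})
      = μ (s ∩ π ⁻¹' {c}) * (Fintype.card Y * μ (π ⁻¹' {c})) := by rw [← huniv, mul_one]
    _ = μ s * μ (π ⁻¹' {c}) := by rw [hsum hs hinv]; ring

/-- An invariant set independent of a generating π-system is independent of itself. -/
lemma preErgodic_of_forall_inter_eq_mul [IsProbabilityMeasure μ] {C : Set (Set X)}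
    (hgen : ‹MeasurableSpace X› = MeasurableSpace.generateFrom C) (hC : IsPiSystem C)
    (h : ∀ s, MeasurableSet s → F ⁻¹' s = s → ∀ t ∈ C, μ (s ∩ t) = μ s * μ t) :
    PreErgodic F μ := by
  refine ⟨fun s hs hinv => Filter.eventuallyConst_set'.mpr ?_⟩
  have hrestrict : μ.restrict s = μ s • μ := by
    refine ext_of_generate_finite C hgen hC (fun t ht => ?_) ?_
    · rw [Measure.restrict_apply' hs, Set.inter_comm, h s hs hinv t ht, Measure.smul_apply,
        smul_eq_mul]
    · rw [Measure.restrict_apply_univ, Measure.smul_apply, measure_univ, smul_eq_mul, mul_one]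
  have hzero : μ s * μ sᶜ = 0 := by
    rw [← smul_eq_mul, ← Measure.smul_apply, ← hrestrict, Measure.restrict_apply' hs,
      Set.compl_inter_self, measure_empty]
  rcases mul_eq_zero.mp hzero with h0 | h0
  · exact .inl (ae_eq_empty.mpr h0)
  · exact .inr (ae_eq_univ.mpr h0)

end Factor

section PadicCylinders

variable [Fact p.Prime] {k n : ℕ}

instance : Measure.IsAddHaarMeasure (haarZk (p := p) k) :=
  inferInstanceAs (Measure.IsAddHaarMeasure (Measure.addHaarMeasure _))

instance : IsProbabilityMeasure (haarZk (p := p) k) where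
  measure_univ := by
    simpa [haarZk] using
      Measure.addHaarMeasure_self (K₀ := (⊤ : TopologicalSpace.PositiveCompacts (Fin k → ℤ_[p])))

lemma congModVec_iff_redVec_eq (x y : Fin k → ℤ_[p]) :
    CongModVec n x y ↔ redVec n x = redVec n y :=
  funext_iff.symm

lemma congModVec_iff_dist_le (x y : Fin k → ℤ_[p]) :
    CongModVec n x y ↔ dist x y ≤ (p : ℝ) ^ (-(n : ℤ)) := by
  rw [dist_pi_le_iff (by positivity)]
  refine forall_congr' fun i => ?_
  rw [CongMod, dist_eq_norm, PadicInt.norm_le_pow_iff_mem_span_pow, ← PadicInt.ker_toZModPow,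
    RingHom.mem_ker, map_sub, sub_eq_zero]

lemma CongModVec.of_le {m : ℕ} (h : n ≤ m) {x y : Fin k → ℤ_[p]} (hxy : CongModVec m x y) :
    CongModVec n x y := by
  rw [congModVec_iff_dist_le] at hxy ⊢
  refine hxy.trans (zpow_le_zpow_right₀ ?_ (by simpa using h))
  exact_mod_cast (Fact.out : p.Prime).one_lt.le

lemma preimage_redVec_singleton (x : Fin k → ℤ_[p]) :
    redVec n ⁻¹' {redVec n x} = Metric.closedBall x ((p : ℝ) ^ (-(n : ℤ))) := by
  ext y
  exact (congModVec_iff_redVec_eq y x).symm.trans (congModVec_iff_dist_le y x)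

noncomputable def liftVec (c : Fin k → ZMod (p ^ n)) : Fin k → ℤ_[p] :=
  fun i => ((c i).val : ℤ_[p])

lemma redVec_liftVec (c : Fin k → ZMod (p ^ n)) : redVec n (liftVec c) = c := by
  funext i
  simp [redVec, liftVec]

lemma isOpen_preimage_redVec_singleton (c : Fin k → ZMod (p ^ n)) :
    IsOpen (redVec n ⁻¹' {c}) := by
  rw [← redVec_liftVec c, preimage_redVec_singleton]
  exact IsUltrametricDist.isOpen_closedBall _
    (zpow_pos (by exact_mod_cast (Fact.out : p.Prime).pos) _).ne'

lemma measurableSet_preimage_redVec_singleton (c : Fin k → ZMod (p ^ n)) :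
    MeasurableSet (redVec n ⁻¹' {c}) :=
  (isOpen_preimage_redVec_singleton c).measurableSet

lemma haarZk_preimage_redVec_singleton_ne_zero (c : Fin k → ZMod (p ^ n)) :
    haarZk k (redVec n ⁻¹' {c}) ≠ 0 :=
  ((isOpen_preimage_redVec_singleton c).measure_pos _ ⟨_, redVec_liftVec c⟩).ne'

variable (p k) in
def cylinders : Set (Set (Fin k → ℤ_[p])) :=
  {s | ∃ (n : ℕ) (c : Fin k → ZMod (p ^ n)), s = redVec n ⁻¹' {c}}

lemma isTopologicalBasis_cylinders : TopologicalSpace.IsTopologicalBasis (cylinders p k) := by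
  refine TopologicalSpace.isTopologicalBasis_of_isOpen_of_nhds ?_ fun x u hxu hu => ?_
  · rintro s ⟨n, c, rfl⟩
    exact isOpen_preimage_redVec_singleton c
  obtain ⟨ε, hε, hball⟩ := Metric.isOpen_iff.mp hu x hxu
  obtain ⟨n, hn⟩ := PadicInt.exists_pow_neg_lt p hε
  refine ⟨_, ⟨n, redVec n x, rfl⟩, rfl, ?_⟩
  rw [preimage_redVec_singleton]
  exact (Metric.closedBall_subset_ball hn).trans hball

lemma borel_eq_generateFrom_cylinders :
    (inferInstance : MeasurableSpace (Fin k → ℤ_[p])) =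
      MeasurableSpace.generateFrom (cylinders p k) :=
  BorelSpace.measurable_eq.trans isTopologicalBasis_cylinders.borel_eq_generateFrom

lemma isPiSystem_cylinders : IsPiSystem (cylinders p k) := by
  have nested : ∀ {n m : ℕ} {c : Fin k → ZMod (p ^ n)} {c' : Fin k → ZMod (p ^ m)}, n ≤ m →
      (redVec n ⁻¹' {c} ∩ redVec m ⁻¹' {c'}).Nonempty →
        redVec m ⁻¹' {c'} ⊆ redVec n ⁻¹' {c} := by
    rintro n m c c' h ⟨z, hzc, hzc'⟩ y hy
    refine ((congModVec_iff_redVec_eq y z).mp (CongModVec.of_le h ?_)).trans hzc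
    exact (congModVec_iff_redVec_eq y z).mpr (hy.trans hzc'.symm)
  rintro s ⟨n, c, rfl⟩ t ⟨m, c', rfl⟩ hst
  rcases le_total n m with h | h
  · rw [Set.inter_eq_right.mpr (nested h hst)]
    exact ⟨m, c', rfl⟩
  · rw [Set.inter_eq_left.mpr (nested h (Set.inter_comm _ _ ▸ hst))]
    exact ⟨n, c, rfl⟩

end PadicCylinders

section InducedMap

variable [Fact p.Prime] {k n : ℕ} {F : (Fin k → ℤ_[p]) → (Fin k → ℤ_[p])}

lemma LipschitzWith.congModVec (hF : LipschitzWith 1 F) {x y : Fin k → ℤ_[p]}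
    (h : CongModVec n x y) : CongModVec n (F x) (F y) := by
  rw [congModVec_iff_dist_le] at h ⊢
  simpa using (hF.dist_le_mul x y).trans (by simpa using h)

/-- `F mod p^n`. -/
noncomputable def inducedMap (F : (Fin k → ℤ_[p]) → (Fin k → ℤ_[p])) (n : ℕ)
    (c : Fin k → ZMod (p ^ n)) : Fin k → ZMod (p ^ n) :=
  redVec n (F (liftVec c))

lemma semiconj_redVec_inducedMap (hF : LipschitzWith 1 F) :
    Function.Semiconj (redVec n) F (inducedMap F n) := fun _ =>
  (congModVec_iff_redVec_eq _ _).mp <|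
    hF.congModVec <| (congModVec_iff_redVec_eq _ _).mpr (redVec_liftVec _).symm

lemma isTransitiveModVec_iff (hF : LipschitzWith 1 F) :
    IsTransitiveModVec F n ↔ ∀ c c', ∃ j, (inducedMap F n)^[j] c = c' := by
  simp only [IsTransitiveModVec, congModVec_iff_redVec_eq,
    (semiconj_redVec_inducedMap hF).iterate_right _ _]
  exact ⟨fun h c c' => by simpa only [redVec_liftVec] using h (liftVec c) (liftVec c'),
    fun h x y => h _ _⟩

lemma isTransitiveModVec_zero : IsTransitiveModVec F 0 := by
  have : Subsingleton (ZMod (p ^ 0)) := by rw [pow_zero]; infer_instance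
  exact fun _ _ => ⟨0, fun _ => Subsingleton.elim _ _⟩

end InducedMap

theorem stmt7 [Fact p.Prime] {k : ℕ}
    (F : (Fin k → ℤ_[p]) → (Fin k → ℤ_[p])) (hF : LipschitzWith 1 F)
    (hmp : MeasurePreserving F (haarZk k) (haarZk k)) :
    Ergodic F (haarZk k) ↔ ∀ n : ℕ, 1 ≤ n → IsTransitiveModVec F n := by
  have hsemiconj n := semiconj_redVec_inducedMap (n := n) hF
  constructor
  · intro hE n _
    exact (isTransitiveModVec_iff hF).mpr <| hE.exists_iterate_eq_of_semiconj (hsemiconj n)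
      measurableSet_preimage_redVec_singleton haarZk_preimage_redVec_singleton_ne_zero
  · intro htrans
    have htrans' n : ∀ c c', ∃ j, (inducedMap F n)^[j] c = c' := by
      refine (isTransitiveModVec_iff hF).mp ?_
      rcases n.eq_zero_or_pos with rfl | hn
      exacts [isTransitiveModVec_zero, htrans n hn]
    refine ⟨hmp, preErgodic_of_forall_inter_eq_mul borel_eq_generateFrom_cylinders
      isPiSystem_cylinders ?_⟩
    rintro s hs hinv _ ⟨n, c, rfl⟩
    exact hmp.measure_inter_fiber_eq_mul (hsemiconj n) measurableSet_preimage_redVec_singleton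
      (htrans' n) hs hinv c
end

section
/- If F : Z_p^k → Z_p^k is a 1-Lipschitz measure-preserving map, then F is a bijection of Z_p^k. -/
open MeasureTheory

variable {p : ℕ}

/-- The complement of the range is open and has preimage `∅`, so it is a null open set. -/
theorem MeasureTheory.MeasurePreserving.surjective_of_continuous {X : Type*}
    [TopologicalSpace X] [CompactSpace X] [T2Space X] [MeasurableSpace X] [OpensMeasurableSpace X]
    {μ : Measure X} [μ.IsOpenPosMeasure] {F : X → X} (hμ : MeasurePreserving F μ μ)
    (hF : Continuous F) : Function.Surjective F := by
  have hclosed : IsClosed (Set.range F) := (isCompact_range hF).isClosed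
  have hnull : μ (Set.range F)ᶜ = 0 := by
    rw [← hμ.measure_preimage hclosed.measurableSet.compl.nullMeasurableSet,
      Set.preimage_compl, Set.preimage_range, Set.compl_univ, measure_empty]
  simpa [Set.compl_empty_iff, Set.range_eq_univ] using
    hclosed.isOpen_compl.measure_eq_zero_iff μ |>.mp hnull

/-- If `F x = F y` with `x ≠ y`, the two disjoint balls of radius `dist x y / 2` around `x` and `y`
both land in the ball of the same radius around `F x`, so its preimage has twice its measure. -/
theorem LipschitzWith.injective_of_measurePreserving {E : Type*} [NormedAddCommGroup E]
    [ProperSpace E] [MeasurableSpace E] [BorelSpace E] {μ : Measure E} [μ.IsAddHaarMeasure]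
    {F : E → E} (hF : LipschitzWith 1 F) (hμ : MeasurePreserving F μ μ) :
    Function.Injective F := by
  intro x y hxy
  by_contra hne
  set r := dist x y / 2
  have hr : 0 < r := half_pos (dist_pos.mpr hne)
  have hmaps : ∀ w, ∀ z ∈ Metric.ball w r, F z ∈ Metric.ball (F w) r := fun w z hz =>
    (hF.dist_le_mul z w).trans_lt (by simpa using hz)
  have hsub : Metric.ball x r ∪ Metric.ball y r ⊆ F ⁻¹' Metric.ball (F x) r := by
    rintro z (hz | hz)
    · exact hmaps x z hz
    · exact hxy ▸ hmaps y z hz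
  have hdouble : μ (Metric.ball (0 : E) r) + μ (Metric.ball 0 r) ≤ μ (Metric.ball 0 r) :=
    calc μ (Metric.ball (0 : E) r) + μ (Metric.ball 0 r)
        = μ (Metric.ball x r ∪ Metric.ball y r) := by
          rw [measure_union (Metric.ball_disjoint_ball (add_halves _).le)
            Metric.isOpen_ball.measurableSet, Measure.addHaar_ball_center μ x,
            Measure.addHaar_ball_center μ y]
      _ ≤ μ (F ⁻¹' Metric.ball (F x) r) := measure_mono hsub
      _ = μ (Metric.ball 0 r) := by
          rw [hμ.measure_preimage Metric.isOpen_ball.measurableSet.nullMeasurableSet,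
            Measure.addHaar_ball_center μ (F x)]
  have hpos : μ (Metric.ball (0 : E) r) ≠ 0 := (Metric.measure_ball_pos μ 0 hr).ne'
  exact (ENNReal.lt_add_right (measure_ball_lt_top (μ := μ)).ne hpos).not_ge hdouble

instance isAddHaarMeasure_haarZk [Fact p.Prime] {k : ℕ} : (haarZk (p := p) k).IsAddHaarMeasure :=
  Measure.isAddHaarMeasure_addHaarMeasure _

theorem stmt8 [Fact p.Prime] {k : ℕ}
    (F : (Fin k → ℤ_[p]) → (Fin k → ℤ_[p])) (hF : LipschitzWith 1 F)
    (hmp : MeasurePreserving F (haarZk k) (haarZk k)) :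
    Function.Bijective F :=
  ⟨hF.injective_of_measurePreserving hmp, hmp.surjective_of_continuous hF.continuous⟩
end
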